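/- Under the decomposition of the previous mixture bound, the marginal H∆H-divergence is bounded by the expected class-conditional divergence plus twice the ℓ₁ class-prior gap: d_{H∆H}(P_X, Q_X) ≤ E_{Y}[d_{H∆H}(P_{X|Y}, Q_{X|Y})] + 2‖P_Y − Q_Y‖₁. -/

import Mathlib

/-!
Write `P_Y(y) p - Q_Y(y) q = P_Y(y) (p - q) + (P_Y(y) - Q_Y(y)) q`. Since `|q| ≤ 1`, every hypothesis
`g` gives `|P_X(g = 1) - Q_X(g = 1)| ≤ Σ_y P_Y(y) |p_y(g) - q_y(g)| + ‖P_Y - Q_Y‖₁`, and the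
class-conditional gaps are bounded by their suprema over `g`.
-/

open Finset

lemma abs_mul_sub_mul_le_of_abs_le_one {a b x z : ℝ} (ha : 0 ≤ a) (hz : |z| ≤ 1) :
    |a * x - b * z| ≤ a * |x - z| + |a - b| :=
  calc |a * x - b * z| = |a * (x - z) + (a - b) * z| := by ring_nf
    _ ≤ |a * (x - z)| + |(a - b) * z| := abs_add_le _ _
    _ ≤ a * |x - z| + |a - b| := by
      rw [abs_mul, abs_mul, abs_of_nonneg ha]
      gcongr
      exact mul_le_of_le_one_right (abs_nonneg _) hz

lemma abs_sum_mul_sub_sum_mul_le {ι : Type*} (s : Finset ι) {a b x z : ι → ℝ}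
    (ha : ∀ i ∈ s, 0 ≤ a i) (hz : ∀ i ∈ s, |z i| ≤ 1) :
    |∑ i ∈ s, a i * x i - ∑ i ∈ s, b i * z i|
      ≤ ∑ i ∈ s, a i * |x i - z i| + ∑ i ∈ s, |a i - b i| :=
  calc |∑ i ∈ s, a i * x i - ∑ i ∈ s, b i * z i|
      = |∑ i ∈ s, (a i * x i - b i * z i)| := by rw [sum_sub_distrib]
    _ ≤ ∑ i ∈ s, |a i * x i - b i * z i| := abs_sum_le_sum_abs _ _
    _ ≤ ∑ i ∈ s, (a i * |x i - z i| + |a i - b i|) :=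
      sum_le_sum fun i hi => abs_mul_sub_mul_le_of_abs_le_one (ha i hi) (hz i hi)
    _ = ∑ i ∈ s, a i * |x i - z i| + ∑ i ∈ s, |a i - b i| := sum_add_distrib

lemma sSup_setOf_exists_eq {G : Type*} (f : G → ℝ) : sSup {r | ∃ g, r = f g} = ⨆ g, f g := by
  simp only [iSup, Set.range, eq_comm]

theorem marginal_dHdH_le_conditional_general {Y G : Type*} [Fintype Y]
    (PY QY : Y → ℝ) (p q : Y → G → ℝ)
    (hPY : ∀ y, 0 ≤ PY y)
    (hp : ∀ y g, p y g ∈ Set.Icc (0 : ℝ) 1) (hq : ∀ y g, q y g ∈ Set.Icc (0 : ℝ) 1) :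
    2 * sSup {r : ℝ | ∃ g, r = |(∑ y, PY y * p y g) - ∑ y, QY y * q y g|}
      ≤ (∑ y, PY y * (2 * sSup {r : ℝ | ∃ g, r = |p y g - q y g|}))
        + 2 * ∑ y, |PY y - QY y| := by
  simp only [sSup_setOf_exists_eq]
  have hgap (y : Y) (g : G) : |p y g - q y g| ≤ ⨆ g, |p y g - q y g| := by
    refine le_ciSup (f := fun g => |p y g - q y g|) ⟨1, ?_⟩ g
    rintro _ ⟨g, rfl⟩
    exact abs_sub_le_of_nonneg_of_le (hp y g).1 (hp y g).2 (hq y g).1 (hq y g).2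
  have hmarg (g : G) : |∑ y, PY y * p y g - ∑ y, QY y * q y g|
      ≤ ∑ y, PY y * (⨆ g, |p y g - q y g|) + ∑ y, |PY y - QY y| := by
    refine (abs_sum_mul_sub_sum_mul_le _ (fun y _ => hPY y)
      (fun y _ => abs_le.2 ⟨by linarith [(hq y g).1], (hq y g).2⟩)).trans ?_
    gcongr with y
    · exact hPY y
    · exact hgap y g
  -- `Real.iSup_le` asks for `0 ≤` the bound, since `⨆` over an empty `G` is the junk value `0`.
  have hbound : 0 ≤ ∑ y, PY y * (⨆ g, |p y g - q y g|) + ∑ y, |PY y - QY y| :=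
    add_nonneg (sum_nonneg fun y _ => mul_nonneg (hPY y) (Real.iSup_nonneg fun _ => abs_nonneg _))
      (sum_nonneg fun _ _ => abs_nonneg _)
  calc 2 * ⨆ g, |∑ y, PY y * p y g - ∑ y, QY y * q y g|
      ≤ 2 * (∑ y, PY y * (⨆ g, |p y g - q y g|) + ∑ y, |PY y - QY y|) := by
        gcongr; exact Real.iSup_le hmarg hbound
    _ = _ := by
        rw [mul_add, mul_sum]
        exact congrArg (· + _) (sum_congr rfl fun _ _ => mul_left_comm _ _ _)

/-- Marginal `H∆H`-divergence bound via class-conditional divergences.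
`G` indexes the hypotheses `g ∈ H∆H`; `p y g` (resp. `q y g`) is the class-conditional
probability `P_{X|Y=y}(g = 1)` (resp. `Q_{X|Y=y}(g = 1)`), and the marginals are the
mixtures `P_X(g=1) = Σ_y P_Y(y) p y g`, `Q_X(g=1) = Σ_y Q_Y(y) q y g`. Then
`d_{H∆H}(P_X, Q_X) ≤ E_Y[d_{H∆H}(P_{X|Y}, Q_{X|Y})] + 2‖P_Y − Q_Y‖₁`. -/
theorem marginal_dHdH_le_conditional {Y G : Type*} [Fintype Y] [Nonempty G]
    (PY QY : Y → ℝ) (p q : Y → G → ℝ)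
    (hPY : ∀ y, 0 ≤ PY y) (hQY : ∀ y, 0 ≤ QY y)
    (hPY1 : ∑ y, PY y = 1) (hQY1 : ∑ y, QY y = 1)
    (hp : ∀ y g, p y g ∈ Set.Icc (0 : ℝ) 1) (hq : ∀ y g, q y g ∈ Set.Icc (0 : ℝ) 1) :
    2 * sSup {r : ℝ | ∃ g, r = |(∑ y, PY y * p y g) - ∑ y, QY y * q y g|}
      ≤ (∑ y, PY y * (2 * sSup {r : ℝ | ∃ g, r = |p y g - q y g|}))
        + 2 * ∑ y, |PY y - QY y| :=
  marginal_dHdH_le_conditional_general PY QY p q hPY hp hq
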